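/- If (p₀), (VD) and condition (Ē) hold (i.e. Ē(x,R) ≤ C E(x,R)), then there is c > 0 such that E(x,R) ≥ c R² for all x ∈ Γ and R > 0. -/

import Mathlib

open scoped ENNReal Classical BigOperators

/-- A weighted graph: symmetric nonnegative edge weights, no loops. -/
structure WGraph (V : Type) where
  w : V → V → ℝ
  symm : ∀ x y, w x y = w y x
  nonneg : ∀ x y, 0 ≤ w x y
  loopless : ∀ x, w x x = 0

namespace WGraph

variable {V : Type} (G : WGraph V)

/-- The underlying simple graph: `x ∼ y` iff `w x y > 0`. -/
def toSimpleGraph : SimpleGraph V where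
  Adj x y := x ≠ y ∧ 0 < G.w x y
  symm := ⟨fun x y h => ⟨h.1.symm, G.symm x y ▸ h.2⟩⟩
  loopless := ⟨fun x h => h.1 rfl⟩

def Adj (x y : V) : Prop := G.toSimpleGraph.Adj x y

/-- Shortest-path graph distance. -/
noncomputable def dist (x y : V) : ℕ := G.toSimpleGraph.dist x y

/-- Vertex measure `μ(x) = Σ_{y} w x y`. -/
noncomputable def mu (x : V) : ℝ≥0∞ := ∑' y, ENNReal.ofReal (G.w x y)

/-- Measure of a set of vertices. -/
noncomputable def muSet (A : Set V) : ℝ≥0∞ := ∑' y : A, G.mu (y : V)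

/-- Open ball of radius `R`. -/
def ball (x : V) (R : ℝ) : Set V := {y | (G.dist x y : ℝ) < R}

/-- Sphere of radius `R`. -/
def sphere (x : V) (R : ℝ) : Set V := {y | (G.dist x y : ℝ) = R}

/-- External boundary of a set. -/
def extBoundary (A : Set V) : Set V := {y | y ∉ A ∧ ∃ z ∈ A, G.Adj z y}

/-- Volume `V(x,R) = μ(B(x,R))`. -/
noncomputable def vol (x : V) (R : ℝ) : ℝ≥0∞ := G.muSet (G.ball x R)

/-- Annulus volume `v(x,r,R) = V(x,R) - V(x,r)`. -/
noncomputable def annv (x : V) (r R : ℝ) : ℝ≥0∞ := G.vol x R - G.vol x r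

/-- Transition kernel `P(x,y) = w x y / μ(x)`. -/
noncomputable def kernel (x y : V) : ℝ≥0∞ := ENNReal.ofReal (G.w x y) / G.mu x

/-- Iterates of the kernel killed outside `A`. -/
noncomputable def killedP (A : Set V) : ℕ → V → V → ℝ≥0∞
  | 0, x, y => if x = y ∧ x ∈ A then 1 else 0
  | n + 1, x, y =>
      ∑' z, killedP A n x z * (if z ∈ A ∧ y ∈ A then G.kernel z y else 0)

/-- Green function of the walk killed on exiting `A`. -/
noncomputable def green (A : Set V) (x y : V) : ℝ≥0∞ := ∑' n, G.killedP A n x y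

/-- Green kernel `g^A(x,y) = G^A(x,y)/μ(y)`. -/
noncomputable def greenK (A : Set V) (x y : V) : ℝ≥0∞ := G.green A x y / G.mu y

/-- Mean exit time from `A` started at `x`: `E_x(T_A) = Σ_y G^A(x,y)`. -/
noncomputable def exitE (A : Set V) (x : V) : ℝ≥0∞ := ∑' y, G.green A x y

/-- `E(x,R)`: mean exit time from the ball `B(x,R)` started at its center. -/
noncomputable def E (x : V) (R : ℝ) : ℝ≥0∞ := G.exitE (G.ball x R) x

/-- Maximal mean exit time `Ē(x,R)`. -/
noncomputable def Ebar (x : V) (R : ℝ) : ℝ≥0∞ :=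
  ⨆ z ∈ G.ball x R, G.exitE (G.ball x R) z

/-- Dirichlet energy `(-Δ f, f)_μ = (1/2) Σ_{x,y} w x y (f x - f y)²`. -/
noncomputable def energy (f : V → ℝ) : ℝ≥0∞ :=
  (∑' p : V × V, ENNReal.ofReal (G.w p.1 p.2 * (f p.1 - f p.2) ^ 2)) / 2

/-- Capacity between `A` and `B`. -/
noncomputable def capacity (A B : Set V) : ℝ≥0∞ :=
  ⨅ (f : V → ℝ) (_ : (∀ x ∈ A, f x = 1) ∧ (∀ x ∈ B, f x = 0)), G.energy f

/-- Effective resistance `ρ(A,B)`. -/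
noncomputable def resistance (A B : Set V) : ℝ≥0∞ := (G.capacity A B)⁻¹

/-- Annulus resistance `ρ(x,r,R)`. -/
noncomputable def rho (x : V) (r R : ℝ) : ℝ≥0∞ :=
  G.resistance (G.ball x r) (G.ball x R)ᶜ

/-- `‖f‖²_μ`. -/
noncomputable def norm2 (f : V → ℝ) : ℝ≥0∞ :=
  ∑' x, ENNReal.ofReal ((f x) ^ 2) * G.mu x

/-- Smallest Dirichlet eigenvalue of `-Δ` on `A` (Rayleigh quotient). -/
noncomputable def lam (A : Set V) : ℝ≥0∞ :=
  ⨅ (f : V → ℝ) (_ : (∀ x, x ∉ A → f x = 0) ∧ f ≠ 0), G.energy f / G.norm2 f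

/-- Condition `(p₀)`: controlled weights. -/
def P0 (p : ℝ) : Prop :=
  ∀ x y, G.Adj x y → ENNReal.ofReal p * G.mu x ≤ ENNReal.ofReal (G.w x y)

/-- Volume doubling. -/
def VD (D : ℝ) : Prop :=
  ∀ x : V, ∀ R : ℝ, 0 < R → G.vol x (2 * R) ≤ ENNReal.ofReal D * G.vol x R

/-- Time comparison principle. -/
def TC (C : ℝ) : Prop :=
  ∀ x : V, ∀ R : ℝ, 0 < R → ∀ y ∈ G.ball x R,
    G.E x (2 * R) ≤ ENNReal.ofReal C * G.E y R

/-- Time doubling. -/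
def TD (D : ℝ) : Prop :=
  ∀ x : V, ∀ R : ℝ, 0 < R → G.E x (2 * R) ≤ ENNReal.ofReal D * G.E x R

/-- Weak time comparison. -/
def WTC (C : ℝ) : Prop :=
  ∀ x : V, ∀ R : ℝ, 0 < R → ∀ y ∈ G.ball x R,
    G.E x R ≤ ENNReal.ofReal C * G.E y R

/-- Weak volume comparison. -/
def WVC (C : ℝ) : Prop :=
  ∀ x : V, ∀ R : ℝ, 0 < R → ∀ y ∈ G.ball x R,
    G.vol x R ≤ ENNReal.ofReal C * G.vol y R

/-- Bounded covering condition. -/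
def BC (K : ℕ) : Prop :=
  ∀ x : V, ∀ R : ℝ, 0 < R → ∃ s : Finset V, s.card ≤ K ∧
    G.ball x (2 * R) ⊆ ⋃ y ∈ s, G.ball y R

end WGraph

/-!
On the finite ball `B = B(x,R)` let `L = diag μ - W` be the Dirichlet Laplacian and
`Γ = ∑ₙ Pᴮⁿ` the Green matrix of the walk killed on leaving `B`, so that `L Γ = diag μ` and the
row sums of `Γ` are mean exit times, hence at most `Ē(x,R)`. For `g = Γ f`, Cauchy–Schwarz for the
positive semidefinite form of `L` gives `‖f‖⁴_μ = ⟨f, L g⟩² ≤ ⟨f, L f⟩ ⟨g, L g⟩`, and the Schur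
test bounds `⟨g, L g⟩ = ⟨f, Γ f⟩_μ ≤ Ē(x,R) ‖f‖²_μ`; thus `‖f‖²_μ ≤ Ē(x,R) ⟨f, L f⟩`, i.e.
`λ⁻¹ ≤ Ē`. The tent `f = (R - d(x,·))₊` is 1-Lipschitz and at most `1` next to the complement
of `B`, so `⟨f, L f⟩ ≤ 3/2 V(x,R)`, while `‖f‖²_μ ≥ (R/2)² V(x,R/2)`. Volume doubling yields
`Ē(x,R) ≥ R² / (6D)`, and `(Ē)` turns this into `E(x,R) ≥ R² / (6CD)`. Condition `(p₀)` and
connectedness make balls finite and `μ` finite.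
-/

open Matrix

section RayleighBound

variable {ι : Type*} [Fintype ι]

theorem sum_mul_mulVec_le_of_weighted_symm {μ : ι → ℝ} {Γ : Matrix ι ι ℝ} {b : ℝ}
    (hμ : ∀ i, 0 ≤ μ i) (hΓ : ∀ i j, 0 ≤ Γ i j) (hsymm : ∀ i j, μ i * Γ i j = μ j * Γ j i)
    (hrow : ∀ i, ∑ j, Γ i j ≤ b) (f : ι → ℝ) :
    ∑ i, μ i * f i * (Γ *ᵥ f) i ≤ b * ∑ i, μ i * f i ^ 2 := by
  have hamgm : ∀ i j, μ i * f i * (Γ i j * f j)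
      ≤ μ i * Γ i j * f i ^ 2 / 2 + μ j * Γ j i * f j ^ 2 / 2 := fun i j => by
    rw [← hsymm i j]
    nlinarith [mul_nonneg (mul_nonneg (hμ i) (hΓ i j)) (sq_nonneg (f i - f j))]
  calc ∑ i, μ i * f i * (Γ *ᵥ f) i
      = ∑ i, ∑ j, μ i * f i * (Γ i j * f j) := by
        simp only [mulVec, dotProduct, Finset.mul_sum]
    _ ≤ ∑ i, ∑ j, (μ i * Γ i j * f i ^ 2 / 2 + μ j * Γ j i * f j ^ 2 / 2) := by
        gcongr with i _ j _
        exact hamgm i j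
    _ = ∑ i, μ i * f i ^ 2 * ∑ j, Γ i j := by
        rw [Finset.sum_congr rfl fun i _ => Finset.sum_add_distrib, Finset.sum_add_distrib,
          Finset.sum_comm (f := fun i j => μ j * Γ j i * f j ^ 2 / 2), ← Finset.sum_add_distrib]
        refine Finset.sum_congr rfl fun i _ => ?_
        rw [← Finset.sum_add_distrib, Finset.mul_sum]
        exact Finset.sum_congr rfl fun j _ => by ring
    _ ≤ ∑ i, μ i * f i ^ 2 * b := by
        gcongr with i _
        · exact mul_nonneg (hμ i) (sq_nonneg _)
        · exact hrow i
    _ = b * ∑ i, μ i * f i ^ 2 := by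
        rw [Finset.mul_sum]
        simp only [mul_comm b]

theorem weighted_symm_of_mul_eq_diagonal [DecidableEq ι] {L Γ : Matrix ι ι ℝ} {μ : ι → ℝ}
    (hL : Lᵀ = L) (hLΓ : L * Γ = diagonal μ) (i j : ι) : μ i * Γ i j = μ j * Γ j i := by
  have hΓL : Γᵀ * L = diagonal μ := by
    rw [← hL, ← transpose_mul, hLΓ, diagonal_transpose]
  have hsymm : (diagonal μ * Γ)ᵀ = diagonal μ * Γ := by
    rw [← hΓL, transpose_mul, transpose_mul, transpose_transpose, hL, Matrix.mul_assoc]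
  simpa [diagonal_mul] using congrFun (congrFun hsymm j) i

theorem sum_mul_sq_le_of_mul_eq_diagonal [DecidableEq ι] {L Γ : Matrix ι ι ℝ} {μ : ι → ℝ}
    {b : ℝ} (hL : Lᵀ = L) (hLpos : ∀ v, 0 ≤ v ⬝ᵥ L *ᵥ v) (hLΓ : L * Γ = diagonal μ)
    (hμ : ∀ i, 0 ≤ μ i) (hΓ : ∀ i j, 0 ≤ Γ i j) (hrow : ∀ i, ∑ j, Γ i j ≤ b) (hb : 0 ≤ b)
    (f : ι → ℝ) :
    ∑ i, μ i * f i ^ 2 ≤ b * (f ⬝ᵥ L *ᵥ f) := by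
  set B : LinearMap.BilinForm ℝ (ι → ℝ) := toLinearMap₂' ℝ L
  have hB : ∀ u v, B u v = u ⬝ᵥ L *ᵥ v := toLinearMap₂'_apply' L
  set g := Γ *ᵥ f
  set N := ∑ i, μ i * f i ^ 2
  have hLg : L *ᵥ g = diagonal μ *ᵥ f := by rw [mulVec_mulVec, hLΓ]
  have hfg : B f g = N := by
    simp only [hB, hLg, dotProduct, mulVec_diagonal, N]
    exact Finset.sum_congr rfl fun i _ => by ring
  have hgf : B g f = N := by
    rw [hB, dotProduct_mulVec, ← mulVec_transpose, hL, dotProduct_comm, ← hB, hfg]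
  have hgg : B g g ≤ b * N :=
    calc B g g = ∑ i, μ i * f i * (Γ *ᵥ f) i := by
          simp only [hB, hLg, dotProduct, mulVec_diagonal, g]
          exact Finset.sum_congr rfl fun i _ => by ring
      _ ≤ b * N := sum_mul_mulVec_le_of_weighted_symm hμ hΓ
          (weighted_symm_of_mul_eq_diagonal hL hLΓ) hrow f
  have hpos : ∀ v, 0 ≤ B v v := fun v => (hB v v).symm ▸ hLpos v
  have hcs : N * N ≤ B f f * B g g := by
    simpa [hfg, hgf] using LinearMap.BilinForm.apply_mul_apply_le_of_forall_zero_le B hpos f g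
  rw [← hB]
  have hN : 0 ≤ N := Finset.sum_nonneg fun i _ => mul_nonneg (hμ i) (sq_nonneg (f i))
  rcases hN.eq_or_lt with hN | hN
  · rw [← hN]
    exact mul_nonneg hb (hpos f)
  · nlinarith [mul_le_mul_of_nonneg_left hgg (hpos f)]

end RayleighBound

namespace WGraph

variable {V : Type} (G : WGraph V)

section LocalFiniteness

theorem ofReal_w_le_mu (x y : V) : ENNReal.ofReal (G.w x y) ≤ G.mu x :=
  ENNReal.le_tsum y

theorem adj_of_w_pos {x y : V} (h : 0 < G.w x y) : G.Adj x y :=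
  ⟨fun hxy => by simp [hxy, G.loopless] at h, h⟩

theorem mu_pos_of_adj {x y : V} (h : G.Adj x y) : 0 < G.mu x :=
  (ENNReal.ofReal_pos.mpr h.2).trans_le (G.ofReal_w_le_mu x y)

theorem exists_adj [Infinite V] (hconn : G.toSimpleGraph.Connected) (x : V) :
    ∃ y, G.Adj x y := by
  obtain ⟨y, hy⟩ := exists_ne x
  obtain ⟨p⟩ := hconn x y
  cases p with
  | nil => exact absurd rfl hy
  | cons h _ => exact ⟨_, h⟩

theorem dist_le_dist_add_one_of_adj (x : V) {y z : V} (h : G.Adj y z) :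
    G.dist x z ≤ G.dist x y + 1 := by
  simpa [dist, SimpleGraph.dist_eq_one_iff_adj.mpr h] using
    SimpleGraph.Reachable.dist_triangle_right (SimpleGraph.Adj.reachable h) x

variable {G} {p₀ : ℝ}

theorem mu_ne_top (hp : 0 < p₀) (h0 : G.P0 p₀) (x : V) : G.mu x ≠ ⊤ := by
  by_cases hw : ∃ y, 0 < G.w x y
  · obtain ⟨y, hy⟩ := hw
    intro htop
    have h := h0 x y (G.adj_of_w_pos hy)
    simp [htop, ENNReal.mul_top, hp] at h
  · push Not at hw
    simp [mu, fun y => le_antisymm (hw y) (G.nonneg x y)]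

theorem finite_setOf_adj (hp : 0 < p₀) (h0 : G.P0 p₀) (x : V) : {y | G.Adj x y}.Finite := by
  rcases Set.eq_empty_or_nonempty {y | G.Adj x y} with h | ⟨y, hy⟩
  · simp [h]
  refine (ENNReal.finite_const_le_of_tsum_ne_top (mu_ne_top hp h0 x) ?_).subset (h0 x)
  exact mul_ne_zero (by simpa using hp) (G.mu_pos_of_adj hy).ne'

theorem finite_setOf_dist_le (hconn : G.toSimpleGraph.Connected) (hp : 0 < p₀)
    (h0 : G.P0 p₀) (x : V) (n : ℕ) : {y | G.dist x y ≤ n}.Finite := by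
  induction n with
  | zero => simp [dist, hconn.dist_eq_zero_iff]
  | succ n ih =>
    refine (ih.union (ih.biUnion fun u _ => finite_setOf_adj hp h0 u)).subset fun y hy => ?_
    by_cases hle : G.dist x y ≤ n
    · exact Or.inl hle
    obtain ⟨p, hlen⟩ := hconn.exists_walk_length_eq_dist y x
    cases p with
    | nil => simp [dist] at hle
    | @cons _ u _ h q =>
      have hq : G.dist x u ≤ n := by
        simp only [Set.mem_ofPred_eq, dist, SimpleGraph.dist_comm (u := x)] at hy
        simp only [SimpleGraph.Walk.length_cons] at hlen
        rw [dist, SimpleGraph.dist_comm]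
        exact (SimpleGraph.dist_le q).trans (by omega)
      exact Or.inr (Set.mem_biUnion hq h.symm)

theorem finite_ball (hconn : G.toSimpleGraph.Connected) (hp : 0 < p₀) (h0 : G.P0 p₀)
    (x : V) (R : ℝ) : (G.ball x R).Finite :=
  (finite_setOf_dist_le hconn hp h0 x ⌈R⌉₊).subset fun _ hy => (Nat.lt_ceil.mpr hy).le

end LocalFiniteness

section KilledWalk

-- Both sides vanish when `μ x` is `0` or `⊤`.
theorem kernel_eq_ofReal_div (x y : V) :
    G.kernel x y = ENNReal.ofReal (G.w x y / (G.mu x).toReal) := by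
  rcases eq_or_ne (G.mu x) ⊤ with htop | htop
  · simp [kernel, htop]
  rcases eq_or_ne (G.mu x) 0 with h0 | h0
  · have hw : ENNReal.ofReal (G.w x y) = 0 := le_antisymm (h0 ▸ G.ofReal_w_le_mu x y) bot_le
    simp [kernel, h0, hw]
  rw [kernel, ENNReal.ofReal_div_of_pos (ENNReal.toReal_pos h0 htop), ENNReal.ofReal_toReal htop]

variable (s : Finset V)

noncomputable def killedMatrix : Matrix s s ℝ :=
  of fun i j => G.w i j / (G.mu i).toReal

noncomputable def greenMatrix : Matrix s s ℝ := ∑' n, G.killedMatrix s ^ n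

theorem killedMatrix_nonneg (i j : s) : 0 ≤ G.killedMatrix s i j :=
  div_nonneg (G.nonneg _ _) ENNReal.toReal_nonneg

theorem killedMatrix_pow_nonneg (n : ℕ) (i j : s) : 0 ≤ (G.killedMatrix s ^ n) i j := by
  induction n generalizing j with
  | zero => by_cases h : i = j <;> simp [h]
  | succ n ih =>
    rw [pow_succ, mul_apply]
    exact Finset.sum_nonneg fun k _ => mul_nonneg (ih k) (G.killedMatrix_nonneg s k j)

theorem killedP_eq_ofReal_killedMatrix_pow (n : ℕ) (i j : s) :
    G.killedP s n i j = ENNReal.ofReal ((G.killedMatrix s ^ n) i j) := by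
  induction n generalizing j with
  | zero => by_cases h : i = j <;> simp [killedP, h]
  | succ n ih =>
    calc G.killedP s (n + 1) i j
        = ∑ k : s, ENNReal.ofReal ((G.killedMatrix s ^ n) i k * G.killedMatrix s k j) := by
          rw [killedP, tsum_eq_sum (s := s) fun z hz => by simp [hz], ← Finset.sum_coe_sort]
          refine Finset.sum_congr rfl fun k _ => ?_
          rw [ih, if_pos ⟨k.2, j.2⟩, kernel_eq_ofReal_div,
            ← ENNReal.ofReal_mul (G.killedMatrix_pow_nonneg s n i k)]
          rfl
      _ = ENNReal.ofReal ((G.killedMatrix s ^ (n + 1)) i j) := by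
          rw [pow_succ, mul_apply]
          exact (ENNReal.ofReal_sum_of_nonneg fun k _ =>
            mul_nonneg (G.killedMatrix_pow_nonneg s n i k) (G.killedMatrix_nonneg s k j)).symm

variable {G s}

theorem summable_killedMatrix_pow (hfin : ∀ i : s, G.exitE s i ≠ ⊤) :
    Summable fun n => G.killedMatrix s ^ n :=
  Pi.summable.mpr fun i => Pi.summable.mpr fun j => by
    have h := ENNReal.summable_toReal
      (ne_top_of_le_ne_top (hfin i) (ENNReal.le_tsum (f := G.green s i) j))
    simp only [killedP_eq_ofReal_killedMatrix_pow] at h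
    exact h.congr fun n => ENNReal.toReal_ofReal (G.killedMatrix_pow_nonneg s n i j)

theorem greenMatrix_apply (hfin : ∀ i : s, G.exitE s i ≠ ⊤) (i j : s) :
    G.greenMatrix s i j = ∑' n, (G.killedMatrix s ^ n) i j :=
  (congrFun (tsum_apply (summable_killedMatrix_pow hfin)) j).trans
    (tsum_apply (Pi.summable.mp (summable_killedMatrix_pow hfin) i))

theorem greenMatrix_nonneg (hfin : ∀ i : s, G.exitE s i ≠ ⊤) (i j : s) :
    0 ≤ G.greenMatrix s i j := by
  rw [greenMatrix_apply hfin]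
  exact tsum_nonneg fun n => G.killedMatrix_pow_nonneg s n i j

theorem green_eq_ofReal_greenMatrix (hfin : ∀ i : s, G.exitE s i ≠ ⊤) (i j : s) :
    G.green s i j = ENNReal.ofReal (G.greenMatrix s i j) := by
  rw [greenMatrix_apply hfin, ENNReal.ofReal_tsum_of_nonneg
    (fun n => G.killedMatrix_pow_nonneg s n i j)
    (Pi.summable.mp (Pi.summable.mp (summable_killedMatrix_pow hfin) i) j)]
  exact tsum_congr fun n => killedP_eq_ofReal_killedMatrix_pow G s n i j

theorem sum_greenMatrix_le_exitE (hfin : ∀ i : s, G.exitE s i ≠ ⊤) (i : s) :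
    ∑ j, G.greenMatrix s i j ≤ (G.exitE s i).toReal := by
  have hsum : ∑ j : s, ENNReal.ofReal (G.greenMatrix s i j) ≤ G.exitE s i := by
    simp only [← green_eq_ofReal_greenMatrix hfin]
    exact (Finset.sum_coe_sort s (G.green s i)).trans_le (ENNReal.sum_le_tsum s)
  rw [← ENNReal.ofReal_sum_of_nonneg fun j _ => greenMatrix_nonneg hfin i j] at hsum
  exact (ENNReal.ofReal_le_iff_le_toReal (hfin i)).mp hsum

theorem one_sub_killedMatrix_mul_greenMatrix (hfin : ∀ i : s, G.exitE s i ≠ ⊤) :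
    (1 - G.killedMatrix s) * G.greenMatrix s = 1 :=
  (summable_killedMatrix_pow hfin).one_sub_mul_tsum_pow

end KilledWalk

section DirichletLaplacian

theorem w_le_toReal_mu {x : V} (hx : G.mu x ≠ ⊤) (y : V) : G.w x y ≤ (G.mu x).toReal :=
  (ENNReal.ofReal_le_iff_le_toReal hx).mp (G.ofReal_w_le_mu x y)

theorem sum_w_le_toReal_mu {x : V} (hx : G.mu x ≠ ⊤) (t : Finset V) :
    ∑ y ∈ t, G.w x y ≤ (G.mu x).toReal := by
  rw [← ENNReal.ofReal_le_iff_le_toReal hx,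
    ENNReal.ofReal_sum_of_nonneg fun y _ => G.nonneg x y]
  exact ENNReal.sum_le_tsum t

theorem sum_w_eq_toReal_mu {x : V} {t : Finset V} (h : ∀ y ∉ t, G.w x y = 0) :
    ∑ y ∈ t, G.w x y = (G.mu x).toReal := by
  rw [mu, tsum_eq_sum (s := t) fun y hy => by simp [h y hy],
    ENNReal.toReal_sum fun _ _ => ENNReal.ofReal_ne_top]
  exact Finset.sum_congr rfl fun y _ => (ENNReal.toReal_ofReal (G.nonneg x y)).symm

theorem toReal_mu_mul_div {x : V} (hx : G.mu x ≠ ⊤) (y : V) :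
    (G.mu x).toReal * (G.w x y / (G.mu x).toReal) = G.w x y := by
  rcases eq_or_ne (G.mu x).toReal 0 with h | h
  · simp [h, le_antisymm (h ▸ G.w_le_toReal_mu hx y) (G.nonneg x y)]
  · exact mul_div_cancel₀ _ h

variable (s : Finset V)

-- For `f` supported in `s`, `f ⬝ᵥ L *ᵥ f` is the paper's `(-Δ f, f)_μ`.
noncomputable def dirichletLaplacian : Matrix s s ℝ :=
  diagonal (fun i : s => (G.mu i).toReal) - of fun i j : s => G.w i j

theorem dirichletLaplacian_transpose :
    (G.dirichletLaplacian s)ᵀ = G.dirichletLaplacian s := by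
  ext i j
  by_cases h : i = j
  · simp [dirichletLaplacian, h]
  · simp [dirichletLaplacian, diagonal_apply_ne _ h, diagonal_apply_ne _ (Ne.symm h),
      G.symm (j : V)]

theorem dotProduct_dirichletLaplacian_mulVec (f : s → ℝ) :
    f ⬝ᵥ G.dirichletLaplacian s *ᵥ f = (∑ i : s, ∑ j : s, G.w i j * (f i - f j) ^ 2) / 2
      + ∑ i : s, f i ^ 2 * ((G.mu i).toReal - ∑ j : s, G.w i j) := by
  have hswap : ∑ i : s, ∑ j : s, G.w i j * f j ^ 2 = ∑ i : s, ∑ j : s, G.w i j * f i ^ 2 := by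
    rw [Finset.sum_comm]
    exact Finset.sum_congr rfl fun i _ => Finset.sum_congr rfl fun j _ => by rw [G.symm]
  have hL : f ⬝ᵥ G.dirichletLaplacian s *ᵥ f
      = ∑ i : s, (G.mu i).toReal * f i ^ 2 - ∑ i : s, ∑ j : s, G.w i j * (f i * f j) := by
    rw [dirichletLaplacian, sub_mulVec, dotProduct_sub]
    congr 1
    · simp only [dotProduct, mulVec_diagonal]
      exact Finset.sum_congr rfl fun i _ => by ring
    · simp only [dotProduct, mulVec, of_apply, Finset.mul_sum]
      exact Finset.sum_congr rfl fun i _ => Finset.sum_congr rfl fun j _ => by ring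
  have hsq : ∑ i : s, ∑ j : s, G.w i j * (f i - f j) ^ 2
      = ∑ i : s, ∑ j : s, G.w i j * f i ^ 2 + ∑ i : s, ∑ j : s, G.w i j * f j ^ 2
        - 2 * ∑ i : s, ∑ j : s, G.w i j * (f i * f j) := by
    simp only [Finset.mul_sum, ← Finset.sum_add_distrib, ← Finset.sum_sub_distrib]
    exact Finset.sum_congr rfl fun i _ => Finset.sum_congr rfl fun j _ => by ring
  have hkill : ∑ i : s, f i ^ 2 * ((G.mu i).toReal - ∑ j : s, G.w i j)
      = ∑ i : s, (G.mu i).toReal * f i ^ 2 - ∑ i : s, ∑ j : s, G.w i j * f i ^ 2 := by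
    simp only [mul_sub, Finset.mul_sum, ← Finset.sum_sub_distrib]
    exact Finset.sum_congr rfl fun i _ => by simp only [mul_comm (f i ^ 2)]
  rw [hL, hsq, hkill, hswap]
  ring

variable {G}

theorem dotProduct_dirichletLaplacian_mulVec_nonneg (hμ : ∀ x, G.mu x ≠ ⊤) (f : s → ℝ) :
    0 ≤ f ⬝ᵥ G.dirichletLaplacian s *ᵥ f := by
  rw [dotProduct_dirichletLaplacian_mulVec]
  refine add_nonneg (div_nonneg (Finset.sum_nonneg fun i _ => Finset.sum_nonneg fun j _ =>
    mul_nonneg (G.nonneg _ _) (sq_nonneg _)) zero_le_two) (Finset.sum_nonneg fun i _ => ?_)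
  refine mul_nonneg (sq_nonneg _) (sub_nonneg.mpr ?_)
  rw [Finset.sum_coe_sort s (G.w i)]
  exact G.sum_w_le_toReal_mu (hμ i) s

theorem dirichletLaplacian_mul_greenMatrix (hμ : ∀ x, G.mu x ≠ ⊤)
    (hfin : ∀ i : s, G.exitE s i ≠ ⊤) :
    G.dirichletLaplacian s * G.greenMatrix s = diagonal fun i : s => (G.mu i).toReal := by
  have h : G.dirichletLaplacian s
      = diagonal (fun i : s => (G.mu i).toReal) * (1 - G.killedMatrix s) := by
    ext i j
    simp [dirichletLaplacian, killedMatrix, mul_sub, diagonal_mul, diagonal_apply, one_apply,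
      G.toReal_mu_mul_div (hμ i)]
  rw [h, Matrix.mul_assoc, one_sub_killedMatrix_mul_greenMatrix hfin, Matrix.mul_one]

end DirichletLaplacian

section Tent

noncomputable def tent (x : V) (R : ℝ) (y : V) : ℝ := max (R - G.dist x y) 0

variable {G} {x : V} {R : ℝ} {s : Finset V}

theorem tent_eq_zero_of_notMem_ball {y : V} (hy : y ∉ G.ball x R) : G.tent x R y = 0 :=
  max_eq_right (sub_nonpos.mpr (not_lt.mp hy))

theorem half_le_tent {y : V} (hy : y ∈ G.ball x (R / 2)) : R / 2 ≤ G.tent x R y :=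
  le_max_of_le_left (by simp only [ball, Set.mem_ofPred_eq] at hy; linarith)

theorem abs_tent_sub_tent_le_one {y z : V} (h : G.Adj y z) :
    |G.tent x R y - G.tent x R z| ≤ 1 := by
  have hyz : (G.dist x z : ℝ) ≤ G.dist x y + 1 := by
    exact_mod_cast G.dist_le_dist_add_one_of_adj x h
  have hzy : (G.dist x y : ℝ) ≤ G.dist x z + 1 := by
    exact_mod_cast G.dist_le_dist_add_one_of_adj x (SimpleGraph.Adj.symm h)
  exact (abs_max_sub_max_le_abs _ _ _).trans (abs_le.mpr ⟨by linarith, by linarith⟩)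

theorem w_mul_sq_tent_sub_tent_le (y z : V) :
    G.w y z * (G.tent x R y - G.tent x R z) ^ 2 ≤ G.w y z := by
  rcases (G.nonneg y z).eq_or_lt with h | h
  · simp [← h]
  · exact mul_le_of_le_one_right h.le ((sq_le_one_iff_abs_le_one _).mpr
      (abs_tent_sub_tent_le_one (G.adj_of_w_pos h)))

-- Mass is killed only at vertices adjacent to the complement of the ball, where the tent is `≤ 1`.
theorem tent_sq_mul_sub_sum_w_le (hs : (s : Set V) = G.ball x R) {y : V} (hy : G.mu y ≠ ⊤) :
    G.tent x R y ^ 2 * ((G.mu y).toReal - ∑ z ∈ s, G.w y z) ≤ (G.mu y).toReal := by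
  have hrest : 0 ≤ (G.mu y).toReal - ∑ z ∈ s, G.w y z :=
    sub_nonneg.mpr (G.sum_w_le_toReal_mu hy s)
  by_cases hleak : ∃ z ∉ s, 0 < G.w y z
  · obtain ⟨z, hzs, hz⟩ := hleak
    have hzball : z ∉ G.ball x R := hs ▸ hzs
    have hsq : G.tent x R y ^ 2 ≤ 1 := by
      have h := abs_tent_sub_tent_le_one (x := x) (R := R) (G.adj_of_w_pos hz)
      rw [tent_eq_zero_of_notMem_ball hzball, sub_zero] at h
      exact (sq_le_one_iff_abs_le_one _).mpr h
    exact (mul_le_of_le_one_left hrest hsq).trans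
      (sub_le_self _ (Finset.sum_nonneg fun z _ => G.nonneg y z))
  · push Not at hleak
    rw [G.sum_w_eq_toReal_mu fun z hz => le_antisymm (hleak z hz) (G.nonneg y z), sub_self,
      mul_zero]
    exact ENNReal.toReal_nonneg

theorem dotProduct_dirichletLaplacian_tent_le (hs : (s : Set V) = G.ball x R)
    (hμ : ∀ y, G.mu y ≠ ⊤) :
    (fun i : s => G.tent x R i) ⬝ᵥ G.dirichletLaplacian s *ᵥ (fun i : s => G.tent x R i)
      ≤ 3 / 2 * ∑ i : s, (G.mu i).toReal := by
  have hjump : ∑ i : s, ∑ j : s, G.w i j * (G.tent x R i - G.tent x R j) ^ 2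
      ≤ ∑ i : s, (G.mu i).toReal :=
    Finset.sum_le_sum fun i _ =>
      (Finset.sum_le_sum fun (j : s) _ =>
        w_mul_sq_tent_sub_tent_le (x := x) (R := R) (i : V) (j : V)).trans
        ((Finset.sum_coe_sort s (G.w i)).trans_le (G.sum_w_le_toReal_mu (hμ i) s))
  have hkill : ∑ i : s, G.tent x R i ^ 2 * ((G.mu i).toReal - ∑ j : s, G.w i j)
      ≤ ∑ i : s, (G.mu i).toReal :=
    Finset.sum_le_sum fun i _ => by
      rw [Finset.sum_coe_sort s (G.w i)]
      exact tent_sq_mul_sub_sum_w_le hs (hμ i)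
  rw [dotProduct_dirichletLaplacian_mulVec]
  linarith

theorem vol_eq_sum (hs : (s : Set V) = G.ball x R) : G.vol x R = ∑ v ∈ s, G.mu v := by
  rw [vol, ← hs, muSet, Finset.tsum_subtype']

theorem toReal_vol_eq_sum (hs : (s : Set V) = G.ball x R) (hμ : ∀ y, G.mu y ≠ ⊤) :
    (G.vol x R).toReal = ∑ i : s, (G.mu i).toReal := by
  rw [vol_eq_sum hs, ENNReal.toReal_sum fun v _ => hμ v, ← Finset.sum_coe_sort s]

theorem sq_mul_toReal_vol_half_le (hs : (s : Set V) = G.ball x R) (hμ : ∀ y, G.mu y ≠ ⊤)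
    (hR : 0 ≤ R) :
    (R / 2) ^ 2 * (G.vol x (R / 2)).toReal
      ≤ ∑ i : s, (G.mu i).toReal * G.tent x R i ^ 2 := by
  have hsub : G.ball x (R / 2) ⊆ s := fun y hy => by
    simp only [hs, ball, Set.mem_ofPred_eq] at hy ⊢
    linarith
  have hvol : G.vol x (R / 2) = ∑ v ∈ s, (G.ball x (R / 2)).indicator G.mu v := by
    rw [vol, muSet, tsum_subtype, tsum_eq_sum (s := s) fun v hv =>
      Set.indicator_of_notMem (fun h => hv (hsub h)) _]
  rw [hvol, ENNReal.toReal_sum fun v _ => by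
      by_cases h : v ∈ G.ball x (R / 2) <;> simp [h, hμ v],
    Finset.mul_sum, ← Finset.sum_coe_sort s]
  refine Finset.sum_le_sum fun i _ => ?_
  by_cases h : (i : V) ∈ G.ball x (R / 2)
  · rw [Set.indicator_of_mem h, mul_comm]
    gcongr
    exact half_le_tent h
  · rw [Set.indicator_of_notMem h, ENNReal.toReal_zero, mul_zero]
    exact mul_nonneg ENNReal.toReal_nonneg (sq_nonneg _)

end Tent

variable {G} {p₀ : ℝ}

theorem sq_mul_vol_half_le_Ebar_mul_vol (hconn : G.toSimpleGraph.Connected) (hp : 0 < p₀)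
    (h0 : G.P0 p₀) {x : V} {R : ℝ} (hR : 0 ≤ R) (hEbar : G.Ebar x R ≠ ⊤) :
    (R / 2) ^ 2 * (G.vol x (R / 2)).toReal
      ≤ (G.Ebar x R).toReal * (3 / 2 * (G.vol x R).toReal) := by
  have hμ := mu_ne_top hp h0
  set s := (finite_ball hconn hp h0 x R).toFinset
  have hs : (s : Set V) = G.ball x R := Set.Finite.coe_toFinset _
  have hexit : ∀ i : s, G.exitE s i ≤ G.Ebar x R := fun i => by
    rw [hs]
    exact le_iSup₂ (f := fun z _ => G.exitE (G.ball x R) z) (i : V) (hs ▸ i.2)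
  have hfin : ∀ i : s, G.exitE s i ≠ ⊤ := fun i => ne_top_of_le_ne_top hEbar (hexit i)
  set f : s → ℝ := fun i => G.tent x R i
  calc (R / 2) ^ 2 * (G.vol x (R / 2)).toReal ≤ ∑ i : s, (G.mu i).toReal * f i ^ 2 :=
        sq_mul_toReal_vol_half_le hs hμ hR
    _ ≤ (G.Ebar x R).toReal * (f ⬝ᵥ G.dirichletLaplacian s *ᵥ f) :=
        sum_mul_sq_le_of_mul_eq_diagonal (G.dirichletLaplacian_transpose s)
          (dotProduct_dirichletLaplacian_mulVec_nonneg s hμ)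
          (dirichletLaplacian_mul_greenMatrix s hμ hfin) (fun _ => ENNReal.toReal_nonneg)
          (greenMatrix_nonneg hfin)
          (fun i => (sum_greenMatrix_le_exitE hfin i).trans
            (ENNReal.toReal_mono hEbar (hexit i)))
          ENNReal.toReal_nonneg f
    _ ≤ (G.Ebar x R).toReal * (3 / 2 * (G.vol x R).toReal) := by
        rw [toReal_vol_eq_sum hs hμ]
        gcongr
        exact dotProduct_dirichletLaplacian_tent_le hs hμ

theorem toReal_vol_pos [Infinite V] (hconn : G.toSimpleGraph.Connected) (hp : 0 < p₀)
    (h0 : G.P0 p₀) (x : V) {R : ℝ} (hR : 0 < R) : 0 < (G.vol x R).toReal := by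
  have hx : x ∈ G.ball x R := by simpa [ball, dist] using hR
  obtain ⟨y, hy⟩ := G.exists_adj hconn x
  refine ENNReal.toReal_pos ?_ ?_
  · exact ((G.mu_pos_of_adj hy).trans_le (ENNReal.le_tsum (⟨x, hx⟩ : G.ball x R))).ne'
  · rw [vol_eq_sum (finite_ball hconn hp h0 x R).coe_toFinset]
    exact ENNReal.sum_ne_top.mpr fun v _ => mu_ne_top hp h0 v

theorem sq_le_mul_toReal_Ebar [Infinite V] (hconn : G.toSimpleGraph.Connected) (hp : 0 < p₀)
    (h0 : G.P0 p₀) {D : ℝ} (hD : 0 ≤ D) (hVD : G.VD D) {x : V} {R : ℝ} (hR : 0 < R)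
    (hEbar : G.Ebar x R ≠ ⊤) : R ^ 2 ≤ 6 * D * (G.Ebar x R).toReal := by
  have hpos := toReal_vol_pos hconn hp h0 x (half_pos hR)
  have hvol : (G.vol x R).toReal ≤ D * (G.vol x (R / 2)).toReal := by
    simpa [ENNReal.toReal_mul, hD, mul_div_cancel₀] using
      ENNReal.toReal_mono
        (ENNReal.mul_ne_top ENNReal.ofReal_ne_top (ENNReal.toReal_pos_iff.mp hpos).2.ne)
        (hVD x (R / 2) (half_pos hR))
  have key : (R / 2) ^ 2 * (G.vol x (R / 2)).toReal
      ≤ (3 / 2 * D * (G.Ebar x R).toReal) * (G.vol x (R / 2)).toReal :=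
    calc (R / 2) ^ 2 * (G.vol x (R / 2)).toReal
        ≤ (G.Ebar x R).toReal * (3 / 2 * (G.vol x R).toReal) :=
          sq_mul_vol_half_le_Ebar_mul_vol hconn hp h0 hR.le hEbar
      _ ≤ (G.Ebar x R).toReal * (3 / 2 * (D * (G.vol x (R / 2)).toReal)) := by gcongr
      _ = (3 / 2 * D * (G.Ebar x R).toReal) * (G.vol x (R / 2)).toReal := by ring
  linarith [le_of_mul_le_mul_right key hpos]

end WGraph

/-- `(p₀)+(VD)+(Ē)` imply `E(x,R) ≥ c R²`. -/
theorem stmt18 (V : Type) [Infinite V] (G : WGraph V)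
    (hconn : G.toSimpleGraph.Connected)
    (p₀ : ℝ) (hp : 0 < p₀) (h0 : G.P0 p₀)
    (hVD : ∃ D : ℝ, 0 < D ∧ G.VD D)
    (hEbar : ∃ C : ℝ, 0 < C ∧ ∀ (x : V) (R : ℝ), 0 < R →
      G.Ebar x R ≤ ENNReal.ofReal C * G.E x R) :
    ∃ c : ℝ, 0 < c ∧ ∀ (x : V) (R : ℝ), 0 < R →
      ENNReal.ofReal (c * R ^ 2) ≤ G.E x R := by
  obtain ⟨D, hD, hVD⟩ := hVD
  obtain ⟨C, hC, hEbar⟩ := hEbar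
  refine ⟨1 / (6 * C * D), by positivity, fun x R hR => ?_⟩
  rcases eq_or_ne (G.E x R) ⊤ with hE | hE
  · simp [hE]
  have hCE : ENNReal.ofReal C * G.E x R ≠ ⊤ := ENNReal.mul_ne_top ENNReal.ofReal_ne_top hE
  have hEbar_le : (G.Ebar x R).toReal ≤ C * (G.E x R).toReal := by
    simpa [ENNReal.toReal_mul, hC.le] using ENNReal.toReal_mono hCE (hEbar x R hR)
  have hlow := WGraph.sq_le_mul_toReal_Ebar hconn hp h0 hD.le hVD hR
    (ne_top_of_le_ne_top hCE (hEbar x R hR))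
  refine ENNReal.ofReal_le_of_le_toReal ?_
  rw [one_div_mul_eq_div, div_le_iff₀ (by positivity)]
  nlinarith
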